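/- arXiv:2503.14844 — 9 statements merged into one kernel-verified Lean document; each statement's English description precedes it below -/
import Mathlib

section
/- Let k ≥ 4 and n ≥ 3(k-1). For integers j with 4 ≤ j ≤ k, define g(j) = C(n-k-j, k-j)·C(n-k, k)^{-1}·(1 + f(j)/(k(k-1))), where f(j) = -(n-k)j² + (n+1)(n-k)j - n(n-1). Then g(j) ≤ 1 for all integers j with 4 ≤ j ≤ k. -/
/-!
Write `m = n - k`. Since `C(m - j, k - j) / C(m, k) = C(k, j) / C(m, j)` and
`k (k - 1) + f(j) = m (j (m + k + 1 - j) - m - 2k + 1)`, the claim is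
`C(k, j) · m (j (m + k + 1 - j) - m - 2k + 1) ≤ C(m, j) · k (k - 1)`.
The quadratic factor is at most `(j - 3)` times its value `3m + 2k - 11` at `j = 4`, and
`j - 3 ≤ 2^(j-4)`. Because `m ≥ 2k - 3`, each step `j ↦ j + 1` at least halves
`C(k, j) / C(m, j)`, which absorbs the factor `2^(j-4)` and reduces everything to `j = 4`,
a cubic inequality in `m` that is tight at `m = 2k - 3`.
-/

namespace Nat

theorem cast_choose_four_mul {k : ℕ} (hk : 3 ≤ k) :
    (k.choose 4 : ℝ) * 24 = k * (k - 1) * (k - 2) * (k - 3) := by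
  have h := congrArg (Nat.cast (R := ℝ)) (descFactorial_eq_factorial_mul_choose k 4)
  simp only [cast_descFactorial, ascPochhammer_succ_eval, ascPochhammer_zero, Polynomial.eval_one,
    cast_mul, factorial, cast_ofNat, cast_sub hk] at h
  push_cast at h
  linear_combination -h

theorem cast_choose_sub_mul_inv_choose {m k j : ℕ} (hjk : j ≤ k) (hkm : k ≤ m) :
    ((m - j).choose (k - j) : ℝ) * (m.choose k : ℝ)⁻¹ = k.choose j / m.choose j := by
  have hmk : (m.choose k : ℝ) ≠ 0 := by exact_mod_cast (choose_pos hkm).ne'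
  have hmj : (m.choose j : ℝ) ≠ 0 := by exact_mod_cast (choose_pos (hjk.trans hkm)).ne'
  rw [← div_eq_mul_inv, div_eq_div_iff hmk hmj]
  have h : (m.choose k * k.choose j : ℝ) = m.choose j * (m - j).choose (k - j) := by
    exact_mod_cast choose_mul hjk
  linear_combination -h

theorem two_pow_mul_choose_mul_choose_le {m k r j : ℕ} (hkm : 2 * k ≤ m + r) (hrj : r ≤ j)
    (hjk : j ≤ k) : 2 ^ (j - r) * k.choose j * m.choose r ≤ k.choose r * m.choose j := by
  induction j, hrj using le_induction with
  | base => simp [Nat.mul_comm]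
  | succ j hrj ih =>
    have ih := ih (by omega)
    have hhalf : 2 * (k - j) ≤ m - j := by omega
    refine Nat.le_of_mul_le_mul_right ?_ (succ_pos j)
    calc 2 ^ (j + 1 - r) * k.choose (j + 1) * m.choose r * (j + 1)
        = 2 ^ (j - r) * 2 * m.choose r * (k.choose (j + 1) * (j + 1)) := by
          rw [show j + 1 - r = j - r + 1 by omega]; ring
      _ = 2 ^ (j - r) * k.choose j * m.choose r * (2 * (k - j)) := by
          rw [choose_succ_right_eq]; ring
      _ ≤ k.choose r * m.choose j * (m - j) := Nat.mul_le_mul ih hhalf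
      _ = k.choose r * m.choose (j + 1) * (j + 1) := by
          rw [Nat.mul_assoc, ← choose_succ_right_eq]; ring

end Nat

theorem quadratic_le_sub_three_mul {M K J : ℝ} (hJ : 4 ≤ J) (hMK : 4 ≤ 2 * M + K) :
    J * (M + K + 1 - J) - M - 2 * K + 1 ≤ (J - 3) * (3 * M + 2 * K - 11) := by
  have hdiff : (J - 3) * (3 * M + 2 * K - 11) - (J * (M + K + 1 - J) - M - 2 * K + 1)
      = (J - 4) * (2 * M + K + J - 8) := by ring
  linarith [mul_nonneg (sub_nonneg.2 hJ) (by linarith : 0 ≤ 2 * M + K + J - 8)]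

theorem cubic_le_of_two_mul_sub_three_le {K M : ℝ} (hK : 3 ≤ K) (hKM : 2 * K - 3 ≤ M) :
    (K - 2) * (K - 3) * (3 * M + 2 * K - 11) ≤ (M - 1) * (M - 2) * (M - 3) := by
  obtain ⟨t, ht, rfl⟩ : ∃ t, 0 ≤ t ∧ M = 2 * K - 3 + t := ⟨M - (2 * K - 3), by linarith, by ring⟩
  have hK3 := sub_nonneg.2 hK
  nlinarith [mul_nonneg ht (mul_nonneg ht ht), mul_nonneg (mul_nonneg ht ht) hK3,
    mul_nonneg ht (mul_nonneg hK3 hK3)]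

theorem cast_choose_four_mul_le {k m : ℕ} (hk : 3 ≤ k) (hkm : 2 * k ≤ m + 3) :
    (k.choose 4 : ℝ) * (m * (3 * m + 2 * k - 11)) ≤ m.choose 4 * (k * (k - 1)) := by
  have hk' : (3 : ℝ) ≤ k := by exact_mod_cast hk
  have hkm' : 2 * (k : ℝ) - 3 ≤ m := by
    have : (2 * k : ℝ) ≤ m + 3 := by exact_mod_cast hkm
    linarith
  have hck := Nat.cast_choose_four_mul hk
  have hcm := Nat.cast_choose_four_mul (k := m) (by omega)
  have hscale : (0 : ℝ) ≤ k * (k - 1) * m := by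
    have : (0 : ℝ) ≤ k - 1 := by linarith
    positivity
  suffices (k.choose 4 : ℝ) * (m * (3 * m + 2 * k - 11)) * 24
      ≤ m.choose 4 * (k * (k - 1)) * 24 by linarith
  calc (k.choose 4 : ℝ) * (m * (3 * m + 2 * k - 11)) * 24
      = k * (k - 1) * m * ((k - 2) * (k - 3) * (3 * m + 2 * k - 11)) := by
        linear_combination (m * (3 * m + 2 * k - 11) : ℝ) * hck
    _ ≤ k * (k - 1) * m * ((m - 1) * (m - 2) * (m - 3)) :=
        mul_le_mul_of_nonneg_left (cubic_le_of_two_mul_sub_three_le hk' hkm') hscale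
    _ = m.choose 4 * (k * (k - 1)) * 24 := by linear_combination -(k * (k - 1) : ℝ) * hcm

theorem cast_choose_mul_quadratic_le {m k j : ℕ} (hj : 4 ≤ j) (hjk : j ≤ k)
    (hkm : 2 * k ≤ m + 3) :
    (k.choose j : ℝ) * (m * (j * (m + k + 1 - j) - m - 2 * k + 1)) ≤ m.choose j * (k * (k - 1)) := by
  have hpow : (j : ℝ) - 3 ≤ 2 ^ (j - 4) := by
    have h : j - 3 ≤ 2 ^ (j - 4) := by have := Nat.lt_two_pow_self (n := j - 4); omega
    have h' : ((j - 3 : ℕ) : ℝ) ≤ 2 ^ (j - 4) := by exact_mod_cast h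
    rwa [Nat.cast_sub (by omega), Nat.cast_ofNat] at h'
  have hratio : (2 ^ (j - 4) * k.choose j * m.choose 4 : ℝ) ≤ k.choose 4 * m.choose j := by
    exact_mod_cast Nat.two_pow_mul_choose_mul_choose_le (by omega) hj hjk
  have hlin : (0 : ℝ) ≤ 3 * m + 2 * k - 11 := by
    have : (4 : ℝ) ≤ k := by exact_mod_cast hj.trans hjk
    have : (2 * k : ℝ) ≤ m + 3 := by exact_mod_cast hkm
    linarith
  have hquad := quadratic_le_sub_three_mul (M := m) (K := k) (J := j) (by exact_mod_cast hj)
    (by linarith)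
  have hm4 : (0 : ℝ) < m.choose 4 := by exact_mod_cast Nat.choose_pos (n := m) (k := 4) (by omega)
  refine le_of_mul_le_mul_left ?_ hm4
  calc (m.choose 4 : ℝ) * (k.choose j * (m * (j * (m + k + 1 - j) - m - 2 * k + 1)))
      ≤ m.choose 4 * (k.choose j * (m * (2 ^ (j - 4) * (3 * m + 2 * k - 11)))) := by
        gcongr
        exact hquad.trans (mul_le_mul_of_nonneg_right hpow hlin)
    _ = (2 ^ (j - 4) * k.choose j * m.choose 4) * (m * (3 * m + 2 * k - 11)) := by ring
    _ ≤ (k.choose 4 * m.choose j) * (m * (3 * m + 2 * k - 11)) := by gcongr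
    _ = m.choose j * (k.choose 4 * (m * (3 * m + 2 * k - 11))) := by ring
    _ ≤ m.choose j * (m.choose 4 * (k * (k - 1))) :=
        mul_le_mul_of_nonneg_left (cast_choose_four_mul_le (by omega) hkm) (by positivity)
    _ = m.choose 4 * (m.choose j * (k * (k - 1))) := by ring

/-- g(j) = C(n-k-j,k-j)/C(n-k,k) · (1 + f(j)/(k(k-1))) ≤ 1 for integers 4 ≤ j ≤ k,
where f(j) = -(n-k)j² + (n+1)(n-k)j - n(n-1). -/
theorem stmt_3 (n k : ℕ) (hk : 4 ≤ k) (hn : 3 * (k - 1) ≤ n) :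
    ∀ j : ℕ, 4 ≤ j → j ≤ k →
      (Nat.choose (n - k - j) (k - j) : ℝ) * ((Nat.choose (n - k) k : ℝ))⁻¹ *
        (1 + (-((n : ℝ) - k) * (j : ℝ) ^ 2 + ((n : ℝ) + 1) * ((n : ℝ) - k) * (j : ℝ)
              - (n : ℝ) * ((n : ℝ) - 1)) / ((k : ℝ) * ((k : ℝ) - 1))) ≤ 1 := by
  intro j hj4 hjk
  obtain ⟨m, rfl⟩ : ∃ m, n = m + k := ⟨n - k, by omega⟩
  have hkk : (0 : ℝ) < k * (k - 1) := by
    have : (4 : ℝ) ≤ k := by exact_mod_cast hk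
    nlinarith
  have hmj : (0 : ℝ) < m.choose j := by exact_mod_cast Nat.choose_pos (n := m) (k := j) (by omega)
  rw [Nat.add_sub_cancel, Nat.cast_choose_sub_mul_inv_choose hjk (by omega), div_mul_eq_mul_div,
    div_le_one hmj, one_add_div hkk.ne', mul_div_assoc', div_le_iff₀ hkk]
  refine (le_of_eq ?_).trans (cast_choose_mul_quadratic_le (m := m) hj4 hjk (by omega))
  push_cast
  ring
end

section
/- Let k ≥ 4 and n ≥ 3(k-1). Define h(j) = j²(2k - n - 2) + jn(n - 2k + 2) + 2k² - 2k - n² + n. Then h(4) = 3n² - (8k+7)n + 2k² + 30k - 32 > 0, and moreover h(j) ≥ 0 for all real j with 4 ≤ j ≤ n/2. -/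
/-- h(j) = j²(2k-n-2) + jn(n-2k+2) + 2k² - 2k - n² + n satisfies
h(4) = 3n² - (8k+7)n + 2k² + 30k - 32 > 0, and h(j) ≥ 0 for real 4 ≤ j ≤ n/2. -/
theorem stmt_4 (n k : ℕ) (hk : 4 ≤ k) (hn : 3 * (k - 1) ≤ n) :
    ((4 : ℝ) ^ 2 * (2 * k - n - 2) + 4 * n * ((n : ℝ) - 2 * k + 2)
        + 2 * (k : ℝ) ^ 2 - 2 * k - (n : ℝ) ^ 2 + n
      = 3 * (n : ℝ) ^ 2 - (8 * (k : ℝ) + 7) * n + 2 * (k : ℝ) ^ 2 + 30 * k - 32) ∧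
    (0 < 3 * (n : ℝ) ^ 2 - (8 * (k : ℝ) + 7) * n + 2 * (k : ℝ) ^ 2 + 30 * k - 32) ∧
    ∀ j : ℝ, 4 ≤ j → j ≤ (n : ℝ) / 2 →
      0 ≤ j ^ 2 * (2 * (k : ℝ) - n - 2) + j * n * ((n : ℝ) - 2 * k + 2)
            + 2 * (k : ℝ) ^ 2 - 2 * k - (n : ℝ) ^ 2 + n := by
  have hk' : (4 : ℝ) ≤ k := by exact_mod_cast hk
  have hn' : 3 * ((k : ℝ) - 1) ≤ n := by
    have h : ((3 * (k - 1) : ℕ) : ℝ) ≤ (n : ℝ) := Nat.cast_le.mpr hn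
    rw [Nat.cast_mul, Nat.cast_sub (by omega : 1 ≤ k)] at h
    push_cast at h ⊢; linarith
  have hA : (0 : ℝ) ≤ (n : ℝ) - 3 * k + 3 := by linarith
  have hB : (0 : ℝ) ≤ (k : ℝ) - 4 := by linarith
  have h4pos : 0 < 3 * (n : ℝ) ^ 2 - (8 * (k : ℝ) + 7) * n + 2 * (k : ℝ) ^ 2 + 30 * k - 32 := by
    nlinarith [mul_nonneg hA hA, mul_nonneg hA hB, mul_nonneg hB hB, mul_nonneg hA  (by linarith : (0:ℝ) ≤ (k:ℝ))]
  have hhalf : (0 : ℝ) ≤ (n : ℝ) ^ 2 * ((n : ℝ) - 2 * k - 2) + 4 * n + 8 * k ^ 2 - 8 * k := by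
    nlinarith [mul_nonneg hA hA, mul_nonneg hA hB, mul_nonneg hB hB,
      mul_nonneg (mul_nonneg hA hA) hA, mul_nonneg (mul_nonneg hA hA) hB,
      mul_nonneg (mul_nonneg hA hB) hB, mul_nonneg (mul_nonneg hB hB) hB,
      mul_nonneg (mul_nonneg hA hA) (by linarith : (0:ℝ) ≤ (k:ℝ)), mul_nonneg (mul_nonneg hA hB)  (by linarith : (0:ℝ) ≤ (k:ℝ))]
  refine ⟨by ring, h4pos, ?_⟩
  intro j hj4 hjn
  have ha : (0 : ℝ) ≤ j - 4 := by linarith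
  have hb : (0 : ℝ) ≤ (n : ℝ) / 2 - j := by linarith
  have hc : (0 : ℝ) ≤ (n : ℝ) + 2 - 2 * k := by linarith
  nlinarith [mul_nonneg ha hb, mul_nonneg (mul_nonneg (mul_nonneg ha hb) hc) (by linarith : (0:ℝ) ≤ (n:ℝ)/2 - 4),
    mul_nonneg ha hhalf, mul_nonneg hb h4pos.le]
end

section
/- Let 0 < p < 1/3 and q = 1 - p. Define f(j) = (p/q)^j·(j - 1 - p) for integers j ≥ 2. Then f(j) > 0 for all j ≥ 2, and f is strictly decreasing along even steps: f(j) > f(j+2) for all j ≥ 2. Consequently, for all even j ≥ 2, p² - q·f(j) ≥ p² - q·f(2) = 0. -/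
/-- For 0 < p < 1/3, q = 1-p, f(j) = (p/q)^j(j-1-p): f(j) > 0 for j ≥ 2,
f(j) > f(j+2) for j ≥ 2, and p² - q·f(j) ≥ 0 for even j ≥ 2 with equality at j = 2. -/
theorem stmt_7 (p : ℝ) (hp0 : 0 < p) (hp1 : p < 1 / 3) (q : ℝ) (hq : q = 1 - p) :
    (∀ j : ℕ, 2 ≤ j → 0 < (p / q) ^ j * ((j : ℝ) - 1 - p)) ∧
    (∀ j : ℕ, 2 ≤ j →
      (p / q) ^ (j + 2) * (((j : ℝ) + 2) - 1 - p) < (p / q) ^ j * ((j : ℝ) - 1 - p)) ∧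
    (p ^ 2 - q * ((p / q) ^ 2 * ((2 : ℝ) - 1 - p)) = 0) ∧
    (∀ j : ℕ, 2 ≤ j → Even j → 0 ≤ p ^ 2 - q * ((p / q) ^ j * ((j : ℝ) - 1 - p))) := by
  have hq0 : 0 < q := by rw [hq]; linarith
  have hr0 : 0 < p / q := div_pos hp0 hq0
  have hr : p / q < 1 / 2 := by
    rw [hq, div_lt_iff₀ (by linarith)]; linarith
  have hpos : ∀ j : ℕ, 2 ≤ j → 0 < (p / q) ^ j * ((j : ℝ) - 1 - p) := by
    intro j hj
    have h2 : (2 : ℝ) ≤ j := by exact_mod_cast hj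
    exact mul_pos (pow_pos hr0 j) (by linarith)
  have hdec : ∀ j : ℕ, 2 ≤ j →
      (p / q) ^ (j + 2) * (((j : ℝ) + 2) - 1 - p) < (p / q) ^ j * ((j : ℝ) - 1 - p) := by
    intro j hj
    have h2 : (2 : ℝ) ≤ j := by exact_mod_cast hj
    have hpow : (p / q) ^ (j + 2) = (p / q) ^ j * (p / q) ^ 2 := by ring
    rw [hpow, mul_assoc]
    apply mul_lt_mul_of_pos_left _ (pow_pos hr0 j)
    nlinarith [mul_pos (sub_pos.mpr hr) (by linarith : (0:ℝ) < 1 / 2 + p / q), h2]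
  have heq : p ^ 2 - q * ((p / q) ^ 2 * ((2 : ℝ) - 1 - p)) = 0 := by
    subst hq
    field_simp
    ring
  refine ⟨hpos, hdec, heq, ?_⟩
  have key : ∀ k : ℕ, 0 ≤ p ^ 2 - q * ((p / q) ^ (2 * k + 2) * (((2 * k + 2 : ℕ) : ℝ) - 1 - p)) := by
    intro k
    induction k with
    | zero => simpa using heq.ge
    | succ n ih =>
      have h := hdec (2 * n + 2) (by omega)
      have harg : (2 * (n + 1) + 2) = (2 * n + 2) + 2 := by omega
      rw [harg]
      have hc : ((2 * n + 2 + 2 : ℕ) : ℝ) = ((2 * n + 2 : ℕ) : ℝ) + 2 := by push_cast; ring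
      rw [hc]
      nlinarith
  intro j hj hje
  obtain ⟨k, hk⟩ : ∃ k, j = 2 * k + 2 := by
    obtain ⟨m, hm⟩ := hje
    exact ⟨m - 1, by omega⟩
  subst hk
  exact key k
end

section
/- Let 0 < p < 1/3 and q = 1 - p. Define f(j) = (p/q)^j·(jq - 1 - p²) for integers j ≥ 3. Then f(j) ≤ f(3) for all odd j ≥ 3, and p² - f(3) = p²(1-2p)(1-3p)/q³ > 0. -/
/-- For 0 < p < 1/3, q = 1-p, f(j) = (p/q)^j(jq - 1 - p²): f(j) ≤ f(3) for odd
j ≥ 3, and p² - f(3) = p²(1-2p)(1-3p)/q³ > 0. -/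
theorem stmt_8 (p : ℝ) (hp0 : 0 < p) (hp1 : p < 1 / 3) (q : ℝ) (hq : q = 1 - p) :
    (∀ j : ℕ, 3 ≤ j → Odd j →
      (p / q) ^ j * ((j : ℝ) * q - 1 - p ^ 2) ≤ (p / q) ^ 3 * ((3 : ℝ) * q - 1 - p ^ 2)) ∧
    (p ^ 2 - (p / q) ^ 3 * ((3 : ℝ) * q - 1 - p ^ 2)
      = p ^ 2 * (1 - 2 * p) * (1 - 3 * p) / q ^ 3) ∧
    0 < p ^ 2 * (1 - 2 * p) * (1 - 3 * p) / q ^ 3 := by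
  have hq0 : (0:ℝ) < q := by rw [hq]; linarith
  have hr0 : (0:ℝ) < p / q := div_pos hp0 hq0
  -- step lemma : f(j+2) ≤ f(j) for j ≥ 3
  have step : ∀ j : ℕ, 3 ≤ j →
      (p / q) ^ (j + 2) * ((↑(j + 2) : ℝ) * q - 1 - p ^ 2) ≤
        (p / q) ^ j * ((j : ℝ) * q - 1 - p ^ 2) := by
    intro j hj
    have hjr : (3:ℝ) ≤ (j:ℝ) := by exact_mod_cast hj
    have hpow : (p / q) ^ (j + 2) = (p / q) ^ j * (p / q) ^ 2 := by ring
    rw [hpow]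
    push_cast
    have key : (p / q) ^ 2 * (((j:ℝ) + 2) * q - 1 - p ^ 2) ≤ ((j:ℝ) * q - 1 - p ^ 2) := by
      rw [div_pow, div_mul_eq_mul_div, div_le_iff₀ (by positivity)]
      have h1 : (1 - 2*p) * ((j:ℝ)*q - 1 - p^2) - 2*p^2*q ≥ 0 := by
        have h2 : (j:ℝ)*q - 1 - p^2 ≥ 2 - 3*p - p^2 := by
          nlinarith
        nlinarith [sq_nonneg p, sq_nonneg (1 - 3*p)]
      have hqp : q^2 - p^2 = 1 - 2*p := by rw [hq]; ring
      have h1' : (q^2 - p^2) * ((j:ℝ)*q - 1 - p^2) - 2*p^2*q ≥ 0 := by rw [hqp]; exact h1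
      nlinarith [h1']
    have h3 : (0:ℝ) ≤ (p / q) ^ j := by positivity
    rw [mul_assoc]
    exact mul_le_mul_of_nonneg_left key h3
  refine ⟨?_, ?_, ?_⟩
  · intro j hj hodd
    obtain ⟨m, hm⟩ := hodd
    have hm1 : 1 ≤ m := by omega
    subst hm
    clear hj
    induction m with
    | zero => omega
    | succ n ih =>
      rcases Nat.lt_or_ge n 1 with h | h
      · interval_cases n
        simp
      · have h1 := ih h
        have h2 := step (2 * n + 1) (by omega)
        have : 2 * (n + 1) + 1 = (2 * n + 1) + 2 := by omega
        rw [this]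
        exact le_trans h2 h1
  · field_simp
    rw [hq]; ring
  · have h1 : 0 < 1 - 2*p := by linarith
    have h2 : 0 < 1 - 3*p := by linarith
    positivity
end

section
/- Let 0 < p < 1, q = 1 - p, and n ≥ 1. Define D₁ = (1/n)·Σ_{j=1}^n ⊗_{i=1}^n D'_{i,j}, where D'_{i,j} = I' (2×2 identity) if i = j and D'_{i,j} = diag(1, -p/q) otherwise. Then D₁ is diagonal and for x ⊆ [n] with |x| = j, its (x,x)-entry equals (-p/q)^j·(1 - j/(np)). -/
open Finset

/-- D₁ = (1/n)Σ_j ⊗_i D'_{i,j} (with D'_{i,j} = I' if i = j and diag(1,-p/(1-p))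
otherwise) is diagonal, with (x,x)-entry (-p/(1-p))^{|x|}(1 - |x|/(np)). -/
theorem stmt_14 (p : ℝ) (hp0 : 0 < p) (hp1 : p < 1) (q : ℝ) (hq : q = 1 - p)
    (n : ℕ) (hn : 1 ≤ n) :
    let D' : Matrix (Fin 2) (Fin 2) ℝ := !![1, 0; 0, -p / q]
    let I' : Matrix (Fin 2) (Fin 2) ℝ := 1
    let entry : Finset (Fin n) → Finset (Fin n) → ℝ := fun x y =>
      (1 / (n : ℝ)) * ∑ j : Fin n, ∏ i : Fin n,
        (if i = j then I' else D') (if i ∈ x then 1 else 0) (if i ∈ y then 1 else 0)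
    (∀ x y : Finset (Fin n), x ≠ y → entry x y = 0) ∧
    (∀ x : Finset (Fin n),
      entry x x = (-(p / q)) ^ x.card * (1 - (x.card : ℝ) / ((n : ℝ) * p))) := by
  intro D' I' entry
  subst hq
  have hq0 : (1 - p) ≠ 0 := by linarith
  have hp0' : p ≠ 0 := ne_of_gt hp0
  have hn0 : (n : ℝ) ≠ 0 := by positivity
  constructor
  · intro x y hxy
    have hex : ∃ i, (i ∈ x) ≠ (i ∈ y) := by
      by_contra h
      push_neg at h
      exact hxy (Finset.ext fun i => by have := h i; tauto)
    obtain ⟨i, hi⟩ := hex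
    simp only [entry]
    rw [Finset.sum_eq_zero, mul_zero]
    intro j _
    apply Finset.prod_eq_zero (Finset.mem_univ i)
    by_cases hix : i ∈ x <;> by_cases hiy : i ∈ y <;>
      simp only [hix, hiy, if_true, if_false] at hi ⊢ <;>
      first
      | exact absurd rfl hi
      | (by_cases hij : i = j <;> simp [hij, I', D', Matrix.one_apply])
  · intro x
    simp only [entry]
    have hfac : ∀ j : Fin n, (∏ i : Fin n,
        (if i = j then I' else D') (if i ∈ x then 1 else 0) (if i ∈ x then 1 else 0))
        = (-(p/(1-p))) ^ (x.erase j).card := by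
      intro j
      rw [← Finset.mul_prod_erase Finset.univ _ (Finset.mem_univ j)]
      have h1 : (if (j : Fin n) = j then I' else D') (if j ∈ x then 1 else 0)
          (if j ∈ x then 1 else 0) = 1 := by
        simp [I', Matrix.one_apply]
      rw [h1, one_mul]
      have h2 : ∀ i ∈ Finset.univ.erase j,
          (if i = j then I' else D') (if i ∈ x then 1 else 0) (if i ∈ x then 1 else 0)
          = if i ∈ x then -(p/(1-p)) else 1 := by
        intro i hi
        rw [Finset.mem_erase] at hi
        rw [if_neg hi.1]
        by_cases hix : i ∈ x <;> simp [hix, D', neg_div]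
      rw [Finset.prod_congr rfl h2, Finset.prod_ite_mem, Finset.prod_const]
      congr 1
      congr 1
      ext i
      simp [Finset.mem_erase, and_comm]
    rw [Finset.sum_congr rfl fun j _ => hfac j]
    have h3 : ∀ j : Fin n, (-(p/(1-p))) ^ (x.erase j).card
        = if j ∈ x then (-(p/(1-p))) ^ (x.card - 1) else (-(p/(1-p))) ^ x.card := by
      intro j
      by_cases hj : j ∈ x
      · rw [if_pos hj, Finset.card_erase_of_mem hj]
      · rw [if_neg hj, Finset.erase_eq_of_notMem hj]
    rw [Finset.sum_congr rfl fun j _ => h3 j, Finset.sum_ite, Finset.sum_const,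
      Finset.sum_const]
    have hfx : Finset.univ.filter (· ∈ x) = x := by ext i; simp
    have hfx' : (Finset.univ.filter (¬ · ∈ x)).card = n - x.card := by
      rw [Finset.filter_not, Finset.card_sdiff_of_subset (by simp [hfx, Finset.subset_univ])]
      simp [hfx]
    rw [hfx, hfx']
    have hkn : x.card ≤ n := by
      simpa using Finset.card_le_card (Finset.subset_univ x)
    rcases Nat.eq_zero_or_pos x.card with hk | hk
    · rw [hk]
      simp
      field_simp
    · obtain ⟨m, hm⟩ : ∃ m, x.card = m + 1 := ⟨x.card - 1, (Nat.succ_pred_eq_of_pos hk).symm⟩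
      rw [hm]
      have hmn : m + 1 ≤ n := hm ▸ hkn
      simp only [Nat.add_sub_cancel, nsmul_eq_mul]
      rw [Nat.cast_sub hmn]
      push_cast
      have : -(p/(1-p)) = -p/(1-p) := by ring
      rw [this, pow_succ]
      field_simp
      ring
end

section
/- Let G be a bipartite graph on vertex set Ω₁ ⊔ Ω₂ and suppose U₁ ⊆ Ω₁, U₂ ⊆ Ω₂ are cross-independent (no edges between U₁ and U₂). Suppose there exist a real number α, real numbers γ_{x,y} for each edge x∼y, and a symmetric entrywise-nonnegative matrix Z indexed by Ω₁ ⊔ Ω₂ such that the matrix S = (1/2)·[[αI, -J],[-J, αI]] + Σ_{x∼y} γ_{x,y}·[[0, E_{x,y}],[E_{y,x}, 0]] - Z is positive semidefinite. Then |U₁|·|U₂| ≤ α². -/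
/-!
Put `M = S + Z`. On `U₁ ⊔ U₂` the matrix `M` has diagonal blocks `(α/2) I` and, because no edge
joins `U₁` to `U₂`, off-diagonal blocks `-J/2`. For the nonnegative vector `v` equal to `√|U₂|` on
`U₁` and `√|U₁|` on `U₂` this gives `vᵀ M v = |U₁||U₂| (α - √(|U₁||U₂|))`. Both `vᵀ S v` (as `S ⪰ 0`)
and `vᵀ Z v` (as `Z ≥ 0` entrywise and `v ≥ 0`) are nonnegative, so `√(|U₁||U₂|) ≤ α` unless
`|U₁||U₂| = 0`.
-/

open Finset Matrix

namespace Matrix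

variable {m n R : Type*}

section Indicator

variable [DecidableEq m] [DecidableEq n]

def blockIndicator [Zero R] (s : Finset m) (t : Finset n) (c d : R) : m ⊕ n → R :=
  Sum.elim (fun i => if i ∈ s then c else 0) (fun j => if j ∈ t then d else 0)

theorem blockIndicator_nonneg [Zero R] [Preorder R] (s : Finset m) (t : Finset n) {c d : R}
    (hc : 0 ≤ c) (hd : 0 ≤ d) : 0 ≤ blockIndicator s t c d := by
  rintro (i | j)
  · exact ite_nonneg hc le_rfl
  · exact ite_nonneg hd le_rfl

end Indicator

variable [Fintype m] [Fintype n]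

theorem sumElim_dotProduct_mulVec_sumElim [CommSemiring R] (M : Matrix (m ⊕ n) (m ⊕ n) R)
    (u u' : m → R) (w w' : n → R) :
    Sum.elim u w ⬝ᵥ M *ᵥ Sum.elim u' w' =
      u ⬝ᵥ M.toBlocks₁₁ *ᵥ u' + u ⬝ᵥ M.toBlocks₁₂ *ᵥ w' +
        (w ⬝ᵥ M.toBlocks₂₁ *ᵥ u' + w ⬝ᵥ M.toBlocks₂₂ *ᵥ w') := by
  conv_lhs => rw [← fromBlocks_toBlocks M]
  simp only [fromBlocks_mulVec, Sum.elim_comp_inl, Sum.elim_comp_inr, sumElim_dotProduct_sumElim,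
    dotProduct_add]

theorem dotProduct_mulVec_nonneg_of_nonneg [CommSemiring R] [PartialOrder R] [IsOrderedRing R]
    {M : Matrix m n R} {v : m → R} {w : n → R}
    (hM : ∀ i j, 0 ≤ M i j) (hv : 0 ≤ v) (hw : 0 ≤ w) : 0 ≤ v ⬝ᵥ M *ᵥ w :=
  dotProduct_nonneg_of_nonneg hv fun i => dotProduct_nonneg_of_nonneg (hM i) hw

variable [DecidableEq m] [DecidableEq n]

theorem ite_dotProduct_mulVec_ite [CommSemiring R] (A : Matrix m n R) (s : Finset m)
    (t : Finset n) (c d : R) :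
    (fun i => if i ∈ s then c else 0) ⬝ᵥ A *ᵥ (fun j => if j ∈ t then d else 0) =
      c * d * ∑ i ∈ s, ∑ j ∈ t, A i j := by
  simp only [dotProduct, mulVec, ite_mul, zero_mul, sum_ite_mem, univ_inter]
  simp only [mul_ite, mul_zero, sum_ite_mem, univ_inter, mul_sum]
  refine sum_congr rfl fun i _ => sum_congr rfl fun j _ => ?_
  ring

theorem blockIndicator_dotProduct_mulVec [CommSemiring R] (M : Matrix (m ⊕ n) (m ⊕ n) R)
    (s : Finset m) (t : Finset n) (a b k c d : R)
    (h₁₁ : ∀ i ∈ s, ∀ i' ∈ s, M (.inl i) (.inl i') = if i = i' then a else 0)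
    (h₂₂ : ∀ j ∈ t, ∀ j' ∈ t, M (.inr j) (.inr j') = if j = j' then b else 0)
    (h₁₂ : ∀ i ∈ s, ∀ j ∈ t, M (.inl i) (.inr j) = k)
    (h₂₁ : ∀ i ∈ s, ∀ j ∈ t, M (.inr j) (.inl i) = k) :
    blockIndicator s t c d ⬝ᵥ M *ᵥ blockIndicator s t c d =
      c * c * a * #s + d * d * b * #t + 2 * c * d * k * #s * #t := by
  rw [blockIndicator, sumElim_dotProduct_mulVec_sumElim, ite_dotProduct_mulVec_ite,
    ite_dotProduct_mulVec_ite, ite_dotProduct_mulVec_ite, ite_dotProduct_mulVec_ite]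
  simp only [toBlocks₁₁, toBlocks₁₂, toBlocks₂₁, toBlocks₂₂, of_apply]
  rw [sum_congr rfl fun i hi => sum_congr rfl fun i' hi' => h₁₁ i hi i' hi',
    sum_congr rfl fun j hj => sum_congr rfl fun j' hj' => h₂₂ j hj j' hj',
    sum_congr rfl fun i hi => sum_congr rfl fun j hj => h₁₂ i hi j hj,
    sum_congr rfl fun j hj => sum_congr rfl fun i hi => h₂₁ i hi j hj]
  simp only [sum_ite_eq, sum_const, nsmul_eq_mul, sum_ite_mem, inter_self]
  ring

end Matrix

theorem le_sq_of_mul_sub_sqrt_nonneg {p α : ℝ} (hp : 0 ≤ p) (h : 0 ≤ p * (α - √p)) :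
    p ≤ α ^ 2 := by
  rcases hp.eq_or_lt with rfl | hp
  · positivity
  exact (Real.sqrt_le_iff.mp (sub_nonneg.mp (nonneg_of_mul_nonneg_right h hp))).2

/-- SDP duality bound: if a feasible dual certificate (α, γ, Z) with S ⪰ 0 exists
for the bipartite graph with adjacency Adj, then any cross-independent pair
(U₁, U₂) satisfies |U₁|·|U₂| ≤ α². -/
theorem stmt_15 {Ω₁ Ω₂ : Type*} [Fintype Ω₁] [Fintype Ω₂] [DecidableEq Ω₁] [DecidableEq Ω₂]
    (Adj : Ω₁ → Ω₂ → Prop) [∀ x y, Decidable (Adj x y)]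
    (U₁ : Finset Ω₁) (U₂ : Finset Ω₂)
    (hcross : ∀ x ∈ U₁, ∀ y ∈ U₂, ¬Adj x y)
    (α : ℝ) (γ : Ω₁ → Ω₂ → ℝ)
    (Z S : Matrix (Ω₁ ⊕ Ω₂) (Ω₁ ⊕ Ω₂) ℝ)
    (hZsymm : Z.IsSymm) (hZnonneg : ∀ a b, 0 ≤ Z a b)
    (hS11 : ∀ x x' : Ω₁, S (Sum.inl x) (Sum.inl x')
      = (1 / 2) * α * (if x = x' then 1 else 0) - Z (Sum.inl x) (Sum.inl x'))
    (hS22 : ∀ y y' : Ω₂, S (Sum.inr y) (Sum.inr y')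
      = (1 / 2) * α * (if y = y' then 1 else 0) - Z (Sum.inr y) (Sum.inr y'))
    (hS12 : ∀ (x : Ω₁) (y : Ω₂), S (Sum.inl x) (Sum.inr y)
      = -(1 / 2) + (if Adj x y then γ x y else 0) - Z (Sum.inl x) (Sum.inr y))
    (hS21 : ∀ (x : Ω₁) (y : Ω₂), S (Sum.inr y) (Sum.inl x) = S (Sum.inl x) (Sum.inr y))
    (hSpsd : S.PosSemidef) :
    (U₁.card : ℝ) * (U₂.card : ℝ) ≤ α ^ 2 := by
  have h₁₂ : ∀ x ∈ U₁, ∀ y ∈ U₂, (S + Z) (.inl x) (.inr y) = -(1 / 2) := by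
    intro x hx y hy
    simp [hS12, hcross x hx y hy]
  have h₂₁ : ∀ x ∈ U₁, ∀ y ∈ U₂, (S + Z) (.inr y) (.inl x) = -(1 / 2) := by
    intro x hx y hy
    rw [Matrix.add_apply, hS21, hZsymm.apply (.inl x) (.inr y), ← Matrix.add_apply]
    exact h₁₂ x hx y hy
  set v := blockIndicator U₁ U₂ √(#U₂ : ℝ) √(#U₁ : ℝ)
  have hv : 0 ≤ v := blockIndicator_nonneg U₁ U₂ (Real.sqrt_nonneg _) (Real.sqrt_nonneg _)
  have hform : v ⬝ᵥ (S + Z) *ᵥ v = #U₁ * #U₂ * (α - √(#U₁ * #U₂)) := by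
    rw [blockIndicator_dotProduct_mulVec (S + Z) U₁ U₂ (α / 2) (α / 2) (-(1 / 2)) _ _
      (fun x _ x' _ => by rw [Matrix.add_apply, hS11]; split_ifs <;> ring)
      (fun y _ y' _ => by rw [Matrix.add_apply, hS22]; split_ifs <;> ring) h₁₂ h₂₁]
    rw [Real.mul_self_sqrt (by positivity), Real.mul_self_sqrt (by positivity),
      Real.sqrt_mul (by positivity)]
    ring
  refine le_sq_of_mul_sub_sqrt_nonneg (by positivity) ?_
  rw [← hform, add_mulVec, dotProduct_add]
  have hS : 0 ≤ v ⬝ᵥ S *ᵥ v := by simpa using hSpsd.dotProduct_mulVec_nonneg v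
  exact add_nonneg hS (dotProduct_mulVec_nonneg_of_nonneg hZnonneg hv hv)
end

section
/- Let Ω₁, Ω₂ be copies of 2^[n], let Δ be the diagonal matrix with (x,x)-entry p^{|x|}(1-p)^{n-|x|}, and let U₁ ⊆ Ω₁, U₂ ⊆ Ω₂ be cross-independent in a bipartite graph G between Ω₁ and Ω₂. Suppose α ∈ ℝ, γ_{x,y} ∈ ℝ for edges x∼y, and entrywise-nonnegative symmetric Z satisfy that S = (1/2)[[αΔ, -ΔJΔ],[-ΔJΔ, αΔ]] + Σ_{x∼y} γ_{x,y}[[0, E_{x,y}],[E_{y,x}, 0]] - Z is positive semidefinite. Then μ_p(U₁)·μ_p(U₂) ≤ α², and if equality holds then S•X = Z•X = 0 where X is the rank-one matrix built from the μ_p-normalized characteristic vectors of U₁ and U₂. -/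
/-! With w = (u₁, u₂) the vector of normalized indicators, X = w wᵀ and S • X = wᵀ S w.
The matrix S + Z is explicit, and its γ-block pairs to zero with u₁ ⊗ u₂ because U₁, U₂ are
cross-independent, so wᵀ (S + Z) w = α - √(μ_p(U₁) μ_p(U₂)) when both families are nonempty.
Both S • X (S is positive semidefinite) and Z • X (Z and w are entrywise nonnegative) are
nonnegative, hence α ≥ √(μ_p(U₁) μ_p(U₂)), and at equality the two slacks vanish. -/

open Matrix Finset

/-- The product measure of a family U ⊆ 2^[n]. -/
def muP (n : ℕ) (p : ℝ) (U : Finset (Finset (Fin n))) : ℝ :=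
  ∑ x ∈ U, p ^ x.card * (1 - p) ^ (n - x.card)

/-- Trace inner product A • B = trace(AᵀB) = Σ_{a,b} A_{ab} B_{ab}. -/
def dotM {m : Type*} [Fintype m] (A B : Matrix m m ℝ) : ℝ :=
  ∑ a, ∑ b, A a b * B a b

/-- The concatenation of the μ_p-normalized characteristic vectors of U₁, U₂. -/
noncomputable def wVec (n : ℕ) (p : ℝ) (U₁ U₂ : Finset (Finset (Fin n))) :
    (Finset (Fin n) ⊕ Finset (Fin n)) → ℝ :=
  Sum.elim (fun x => (if x ∈ U₁ then 1 else 0) / Real.sqrt (muP n p U₁))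
    (fun x => (if x ∈ U₂ then 1 else 0) / Real.sqrt (muP n p U₂))

theorem dotM_vecMulVec {ι : Type*} [Fintype ι] (A : Matrix ι ι ℝ) (w : ι → ℝ) :
    dotM A (vecMulVec w w) = w ⬝ᵥ A *ᵥ w := by
  simp only [dotM, vecMulVec_apply, dotProduct, mulVec, Finset.mul_sum]
  exact Finset.sum_congr rfl fun a _ => Finset.sum_congr rfl fun b _ => by ring

theorem dotProduct_mulVec_nonneg_of_nonneg {ι R : Type*} [Fintype ι] [Semiring R] [PartialOrder R]
    [IsOrderedRing R] {A : Matrix ι ι R} {w : ι → R}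
    (hA : ∀ a b, 0 ≤ A a b) (hw : 0 ≤ w) : 0 ≤ w ⬝ᵥ A *ᵥ w :=
  Finset.sum_nonneg fun a _ =>
    mul_nonneg (hw a) (Finset.sum_nonneg fun b _ => mul_nonneg (hA a b) (hw b))

theorem sumElim_dotProduct_fromBlocks_mulVec {ι κ R : Type*} [Fintype ι] [Fintype κ]
    [NonUnitalNonAssocSemiring R] (A : Matrix ι ι R) (B : Matrix ι κ R) (C : Matrix κ ι R)
    (D : Matrix κ κ R) (u : ι → R) (v : κ → R) :
    Sum.elim u v ⬝ᵥ fromBlocks A B C D *ᵥ Sum.elim u v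
      = u ⬝ᵥ A *ᵥ u + u ⬝ᵥ B *ᵥ v + (v ⬝ᵥ C *ᵥ u + v ⬝ᵥ D *ᵥ v) := by
  rw [fromBlocks_mulVec, sumElim_dotProduct_sumElim]
  simp only [Sum.elim_comp_inl, Sum.elim_comp_inr, dotProduct_add]

section DualCertificate

variable {ι : Type*} [DecidableEq ι]

/-- The matrix S + Z of the dual certificate, `(1/2)[[αΔ, -ΔJΔ], [-ΔJΔ, αΔ]] + [[0, Γ], [Γᵀ, 0]]`,
with `Δ = diagonal m`, `ΔJΔ = vecMulVec m m` and `Γ` the `γ`-weighted adjacency matrix. -/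
noncomputable def dualBlockMatrix (m : ι → ℝ) (α : ℝ) (Γ : Matrix ι ι ℝ) :
    Matrix (ι ⊕ ι) (ι ⊕ ι) ℝ :=
  fromBlocks ((α / 2) • diagonal m) (Γ - (1 / 2 : ℝ) • vecMulVec m m)
    (Γᵀ - (1 / 2 : ℝ) • vecMulVec m m) ((α / 2) • diagonal m)

noncomputable def normalizedIndicator (m : ι → ℝ) (U : Finset ι) : ι → ℝ :=
  fun x => (if x ∈ U then 1 else 0) / √(∑ y ∈ U, m y)

theorem normalizedIndicator_nonneg (m : ι → ℝ) (U : Finset ι) : 0 ≤ normalizedIndicator m U :=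
  fun x => by unfold normalizedIndicator; positivity

variable [Fintype ι]

theorem sumElim_dotProduct_dualBlockMatrix_mulVec (m u v : ι → ℝ) (α : ℝ) (Γ : Matrix ι ι ℝ)
    (hΓ : ∀ x y, u x * Γ x y * v y = 0) :
    Sum.elim u v ⬝ᵥ dualBlockMatrix m α Γ *ᵥ Sum.elim u v
      = α / 2 * (∑ x, m x * u x ^ 2 + ∑ x, m x * v x ^ 2) - (m ⬝ᵥ u) * (m ⬝ᵥ v) := by
  have hΓv : u ⬝ᵥ Γ *ᵥ v = 0 := by
    simp [dotProduct, mulVec, Finset.mul_sum, ← mul_assoc, hΓ]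
  have hdiag (w : ι → ℝ) : w ⬝ᵥ diagonal m *ᵥ w = ∑ x, m x * w x ^ 2 := by
    simp only [mulVec_diagonal, dotProduct]
    exact Finset.sum_congr rfl fun x _ => by ring
  have hrank (w w' : ι → ℝ) : w ⬝ᵥ vecMulVec m m *ᵥ w' = (m ⬝ᵥ w) * (m ⬝ᵥ w') := by
    rw [vecMulVec_mulVec, op_smul_eq_smul, dotProduct_smul, smul_eq_mul, dotProduct_comm w m,
      mul_comm]
  rw [dualBlockMatrix, sumElim_dotProduct_fromBlocks_mulVec]
  simp only [sub_mulVec, smul_mulVec, dotProduct_sub, dotProduct_smul, smul_eq_mul, hdiag, hrank,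
    dotProduct_transpose_mulVec, hΓv]
  ring

theorem dotProduct_normalizedIndicator (m : ι → ℝ) (U : Finset ι) :
    m ⬝ᵥ normalizedIndicator m U = √(∑ x ∈ U, m x) := by
  simp only [normalizedIndicator, dotProduct, mul_div_assoc', mul_ite, mul_one, mul_zero,
    ← Finset.sum_div, Finset.sum_ite_mem, Finset.univ_inter, Real.div_sqrt]

theorem sum_mul_normalizedIndicator_sq (m : ι → ℝ) (U : Finset ι) (hU : 0 ≤ ∑ x ∈ U, m x) :
    ∑ x, m x * normalizedIndicator m U x ^ 2 = (∑ x ∈ U, m x) / ∑ x ∈ U, m x := by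
  simp only [normalizedIndicator, div_pow, Real.sq_sqrt hU, ite_pow, one_pow, zero_pow two_ne_zero,
    mul_div_assoc', mul_ite, mul_one, mul_zero, ← Finset.sum_div, Finset.sum_ite_mem,
    Finset.univ_inter]

theorem sumElim_normalizedIndicator_dotProduct_dualBlockMatrix_mulVec (m : ι → ℝ) (α : ℝ)
    (Γ : Matrix ι ι ℝ) {U V : Finset ι} (hU : 0 ≤ ∑ x ∈ U, m x) (hV : 0 ≤ ∑ x ∈ V, m x)
    (hΓ : ∀ x ∈ U, ∀ y ∈ V, Γ x y = 0) :
    Sum.elim (normalizedIndicator m U) (normalizedIndicator m V) ⬝ᵥ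
        dualBlockMatrix m α Γ *ᵥ Sum.elim (normalizedIndicator m U) (normalizedIndicator m V)
      = α / 2 * ((∑ x ∈ U, m x) / ∑ x ∈ U, m x + (∑ x ∈ V, m x) / ∑ x ∈ V, m x)
        - √(∑ x ∈ U, m x) * √(∑ x ∈ V, m x) := by
  have hΓ' (x y) : normalizedIndicator m U x * Γ x y * normalizedIndicator m V y = 0 := by
    by_cases hx : x ∈ U <;> by_cases hy : y ∈ V <;> simp [normalizedIndicator, hx, hy, hΓ]
  rw [sumElim_dotProduct_dualBlockMatrix_mulVec m _ _ α Γ hΓ',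
    sum_mul_normalizedIndicator_sq m U hU, sum_mul_normalizedIndicator_sq m V hV,
    dotProduct_normalizedIndicator, dotProduct_normalizedIndicator]

end DualCertificate

/-- `a / a` is `1` except at `a = 0` (an empty family), where it is `0`. -/
theorem mul_le_sq_and_slack_eq_zero {a b α t : ℝ} (ha : 0 ≤ a) (hb : 0 ≤ b) (ht : 0 ≤ t)
    (h : α / 2 * (a / a + b / b) - √a * √b = t) : a * b ≤ α ^ 2 ∧ (a * b = α ^ 2 → t = 0) := by
  rcases ha.eq_or_lt with rfl | ha
  · simp only [zero_mul, Real.sqrt_zero, div_zero, zero_add, zero_mul, sub_zero] at h ⊢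
    exact ⟨sq_nonneg α, fun hα => by rw [← h, pow_eq_zero_iff two_ne_zero |>.mp hα.symm]; ring⟩
  rcases hb.eq_or_lt with rfl | hb
  · simp only [mul_zero, Real.sqrt_zero, div_zero, add_zero, mul_zero, sub_zero] at h ⊢
    exact ⟨sq_nonneg α, fun hα => by rw [← h, pow_eq_zero_iff two_ne_zero |>.mp hα.symm]; ring⟩
  rw [div_self ha.ne', div_self hb.ne', ← Real.sqrt_mul ha.le] at h
  have hsq := Real.sq_sqrt (mul_nonneg ha.le hb.le)
  have hs := Real.sqrt_nonneg (a * b)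
  constructor
  · nlinarith
  · intro heq
    nlinarith

/-- Measure-setting SDP duality: the feasibility of the dual certificate
(α, γ, Z) yields μ_p(U₁)μ_p(U₂) ≤ α², with complementary slackness
S•X = Z•X = 0 in case of equality, where X = w wᵀ. -/
theorem stmt_16 (n : ℕ) (p : ℝ) (hp0 : 0 < p) (hp1 : p < 1)
    (Adj : Finset (Fin n) → Finset (Fin n) → Prop) [∀ x y, Decidable (Adj x y)]
    (U₁ U₂ : Finset (Finset (Fin n)))
    (hcross : ∀ x ∈ U₁, ∀ y ∈ U₂, ¬Adj x y)
    (α : ℝ) (γ : Finset (Fin n) → Finset (Fin n) → ℝ)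
    (Z S : Matrix (Finset (Fin n) ⊕ Finset (Fin n)) (Finset (Fin n) ⊕ Finset (Fin n)) ℝ)
    (hZsymm : Z.IsSymm) (hZnonneg : ∀ a b, 0 ≤ Z a b)
    (m : Finset (Fin n) → ℝ)
    (hm : ∀ x, m x = p ^ x.card * (1 - p) ^ (n - x.card))
    (hS11 : ∀ x x', S (Sum.inl x) (Sum.inl x')
      = (1 / 2) * α * (if x = x' then m x else 0) - Z (Sum.inl x) (Sum.inl x'))
    (hS22 : ∀ y y', S (Sum.inr y) (Sum.inr y')
      = (1 / 2) * α * (if y = y' then m y else 0) - Z (Sum.inr y) (Sum.inr y'))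
    (hS12 : ∀ x y, S (Sum.inl x) (Sum.inr y)
      = -(1 / 2) * m x * m y + (if Adj x y then γ x y else 0) - Z (Sum.inl x) (Sum.inr y))
    (hS21 : ∀ x y, S (Sum.inr y) (Sum.inl x) = S (Sum.inl x) (Sum.inr y))
    (hSpsd : S.PosSemidef) :
    muP n p U₁ * muP n p U₂ ≤ α ^ 2 ∧
    (muP n p U₁ * muP n p U₂ = α ^ 2 →
      dotM S (Matrix.of fun a b => wVec n p U₁ U₂ a * wVec n p U₁ U₂ b) = 0 ∧
      dotM Z (Matrix.of fun a b => wVec n p U₁ U₂ a * wVec n p U₁ U₂ b) = 0) := by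
  have hm_nonneg (x) : 0 ≤ m x := by
    have := sub_pos.2 hp1
    rw [hm]; positivity
  have hμ (U) : muP n p U = ∑ x ∈ U, m x := Finset.sum_congr rfl fun x _ => (hm x).symm
  have hμ_nonneg (U : Finset (Finset (Fin n))) : 0 ≤ ∑ x ∈ U, m x :=
    sum_nonneg fun x _ => hm_nonneg x
  set Γ : Matrix (Finset (Fin n)) (Finset (Fin n)) ℝ := of fun x y => if Adj x y then γ x y else 0
  have hS : S = dualBlockMatrix m α Γ - Z := by
    ext (x | y) (x' | y') <;>
      simp only [dualBlockMatrix, Γ, Matrix.sub_apply, fromBlocks_apply₁₁, fromBlocks_apply₁₂,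
        fromBlocks_apply₂₁, fromBlocks_apply₂₂, Matrix.smul_apply, smul_eq_mul, diagonal_apply,
        vecMulVec_apply, transpose_apply, of_apply, hS11, hS12, hS21, hS22, hZsymm.apply,
        mul_ite, mul_zero, sub_left_inj] <;> ring_nf
  set w := Sum.elim (normalizedIndicator m U₁) (normalizedIndicator m U₂)
  have hX : (Matrix.of fun a b => wVec n p U₁ U₂ a * wVec n p U₁ U₂ b) = vecMulVec w w := by
    simp only [wVec, hμ]; rfl
  have hSX : 0 ≤ w ⬝ᵥ S *ᵥ w := by simpa using hSpsd.dotProduct_mulVec_nonneg w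
  have hZX : 0 ≤ w ⬝ᵥ Z *ᵥ w := dotProduct_mulVec_nonneg_of_nonneg hZnonneg
    (Sum.const_le_elim_iff.2
      ⟨normalizedIndicator_nonneg m U₁, normalizedIndicator_nonneg m U₂⟩)
  have hslack := sumElim_normalizedIndicator_dotProduct_dualBlockMatrix_mulVec m α Γ
    (hμ_nonneg U₁) (hμ_nonneg U₂) fun x hx y hy => if_neg (hcross x hx y hy)
  rw [← sub_add_cancel (dualBlockMatrix m α Γ) Z, ← hS, add_mulVec, dotProduct_add] at hslack
  obtain ⟨hle, hslack_eq⟩ := mul_le_sq_and_slack_eq_zero (hμ_nonneg U₁) (hμ_nonneg U₂)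
    (add_nonneg hSX hZX) hslack.symm
  rw [hX, dotM_vecMulVec, dotM_vecMulVec, hμ, hμ]
  exact ⟨hle, fun h => by have := hslack_eq h; constructor <;> linarith⟩
end

section
/- Let 0 < p < 1/3 and q = 1 - p, and set ε₀ = p²/2 - ε₁, γ₀ = -1/2 + pqn/2 + ε₁, γ₁ = -pqn/2 - ε₁, λ₀(j) = (-p/q)^j, λ₁(j) = (-p/q)^j(1 - j/(np)). Define u_j = p²/2 - ε₀λ₀(j) - ε₁λ₁(j) and v_j = δ_j - γ₀λ₀(j) - γ₁λ₁(j) with δ₀ = -1/2 and δ_j = 0 for j ≥ 1. Then u₀ = v₀ = 0 and u₁ = -v₁ = (p²n - 2ε₁)/(2qn); moreover, for sufficiently small ε₁ > 0, the 2×2 matrix [[u_j, v_j],[v_j, u_j]] is positive semidefinite for every integer j with 0 ≤ j ≤ n. -/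
/-!
For `j ≥ 1` the eigenvalues `u_j ± v_j` of the `j`-th block are `p²/2` plus `(-p/q)^j` times
an affine function of `j`; `ε₁` enters only `u_j - v_j`, through a term `O(ε₁ (p/q)^j / p)`.
A sequence `(p/q)^j (q j - c)` is decreasing as soon as `q j` is large compared with `c`, so the
dangerous signs are controlled by small `j`: for even `j` by `j = 2` (where `u_j + v_j = 0`) and
`j = 4` (where `p < 1/3` is exactly what is needed), for odd `j` by `j = 3`, which leaves a slack
`p²(1-2p)(1-3p)/q³` absorbing the `ε₁`-term once `4 ε₁ ≤ (1-2p)(1-3p)`.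
-/

open Matrix

lemma posSemidef_of_add_nonneg_of_sub_nonneg {a b : ℝ} (h₁ : 0 ≤ a + b) (h₂ : 0 ≤ a - b) :
    PosSemidef !![a, b; b, a] := by
  refine .of_dotProduct_mulVec_nonneg ?_ fun x ↦ ?_
  · ext i j
    fin_cases i <;> fin_cases j <;> rfl
  · simp only [dotProduct, Pi.star_apply, star_trivial, mulVec, of_apply, cons_val',
      cons_val_fin_one, Fin.sum_univ_two, Fin.isValue, cons_val_zero, cons_val_one]
    nlinarith [mul_nonneg h₁ (sq_nonneg (x 0 + x 1)), mul_nonneg h₂ (sq_nonneg (x 0 - x 1))]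

lemma div_pow_mul_sub_le_of_le {p q c : ℝ} (hp : 0 < p) (hpq : p ≤ q) {j₀ j : ℕ}
    (hstep : p * (q * (j₀ + 1) - c) ≤ q * (q * j₀ - c)) (hj : j₀ ≤ j) :
    (p / q) ^ j * (q * j - c) ≤ (p / q) ^ j₀ * (q * j₀ - c) := by
  have hq : 0 < q := hp.trans_le hpq
  refine antitoneOn_nat_Ici_of_succ_le (f := fun j : ℕ ↦ (p / q) ^ j * (q * j - c))
    (fun i hi ↦ ?_) (le_refl j₀) hj hj
  -- the one-step condition is `p q + (q - p) c ≤ q (q - p) i`, which only improves as `i` grows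
  have hi' : (j₀ : ℝ) ≤ i := by exact_mod_cast hi
  have step : p * (q * (i + 1) - c) ≤ q * (q * i - c) := by
    nlinarith [mul_nonneg (mul_nonneg hq.le (sub_nonneg.2 hpq)) (sub_nonneg.2 hi')]
  have : (p / q) * (q * (i + 1 : ℕ) - c) ≤ q * i - c := by
    rw [div_mul_eq_mul_div, div_le_iff₀ hq]; push_cast; linarith
  calc (p / q) ^ (i + 1) * (q * (i + 1 : ℕ) - c)
      = (p / q) ^ i * ((p / q) * (q * (i + 1 : ℕ) - c)) := by ring
    _ ≤ (p / q) ^ i * (q * i - c) := by gcongr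

section

variable {p q : ℝ}

lemma div_pow_mul_sub_le_sq_of_even (hp0 : 0 < p) (hp1 : p < 1 / 3) (hq : q = 1 - p) {j : ℕ}
    (hj : 2 ≤ j) (he : Even j) : (p / q) ^ j * (q * j - (1 - p ^ 2)) ≤ p ^ 2 := by
  have hq0 : 0 < q := by linarith
  obtain rfl | hj4 : j = 2 ∨ 4 ≤ j := by obtain ⟨k, rfl⟩ := he; omega
  · apply le_of_eq; subst hq; field_simp; ring
  calc (p / q) ^ j * (q * j - (1 - p ^ 2))
      ≤ (p / q) ^ 4 * (q * (4 : ℕ) - (1 - p ^ 2)) :=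
        div_pow_mul_sub_le_of_le hp0 (by linarith) (by push_cast; subst hq; nlinarith) hj4
    _ = p ^ 2 - p ^ 2 * (1 - 3 * p) / q ^ 3 := by subst hq; field_simp; ring
    _ ≤ p ^ 2 :=
      sub_le_self _ (div_nonneg (mul_nonneg (sq_nonneg p) (by linarith)) (by positivity))

lemma div_pow_mul_sub_le_of_three_le (hp0 : 0 < p) (hp1 : p < 1 / 3) (hq : q = 1 - p) {j : ℕ}
    (hj : 3 ≤ j) :
    (p / q) ^ j * (q * j - (1 + p ^ 2))
      ≤ p ^ 2 - p ^ 2 * ((1 - 2 * p) * (1 - 3 * p)) / q ^ 3 := by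
  have hq0 : 0 < q := by linarith
  calc (p / q) ^ j * (q * j - (1 + p ^ 2))
      ≤ (p / q) ^ 3 * (q * (3 : ℕ) - (1 + p ^ 2)) :=
        div_pow_mul_sub_le_of_le hp0 (by linarith) (by push_cast; subst hq; nlinarith) hj
    _ = p ^ 2 - p ^ 2 * ((1 - 2 * p) * (1 - 3 * p)) / q ^ 3 := by subst hq; field_simp; ring

-- `2 (u_j + v_j)` and `2 (u_j - v_j)` for `j ≥ 1`
lemma block_add_nonneg (hp0 : 0 < p) (hp1 : p < 1 / 3) (hq : q = 1 - p) {j : ℕ}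
    (hj : 2 ≤ j) : 0 ≤ p ^ 2 + (-(p / q)) ^ j * (1 - p ^ 2 - q * j) := by
  have hq0 : 0 < q := by linarith
  have hj' : (2 : ℝ) ≤ j := by exact_mod_cast hj
  rcases Nat.even_or_odd j with he | ho
  · rw [he.neg_pow]
    linarith [div_pow_mul_sub_le_sq_of_even hp0 hp1 hq hj he]
  · have hrw : (-(p / q)) ^ j * (1 - p ^ 2 - q * j) = (p / q) ^ j * (q * j - (1 - p ^ 2)) := by
      rw [ho.neg_pow]; ring
    have : 0 ≤ q * j - (1 - p ^ 2) := by subst hq; nlinarith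
    rw [hrw]
    positivity

lemma block_sub_nonneg (hp0 : 0 < p) (hp1 : p < 1 / 3) (hq : q = 1 - p)
    {n j : ℕ} (hj : 2 ≤ j) (hjn : j ≤ n) {ε : ℝ} (hε0 : 0 ≤ ε)
    (hε : 4 * ε ≤ (1 - 2 * p) * (1 - 3 * p)) :
    0 ≤ p ^ 2 + (-(p / q)) ^ j * (q * j - (1 + p ^ 2) + 4 * ε * j / (n * p)) := by
  have hq0 : 0 < q := by linarith
  have hj' : (2 : ℝ) ≤ j := by exact_mod_cast hj
  have hjn' : (j : ℝ) ≤ n := by exact_mod_cast hjn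
  have hr : 0 ≤ p / q := by positivity
  have hεj : 0 ≤ 4 * ε * j / (n * p) := by positivity
  rcases Nat.even_or_odd j with he | ho
  · rw [he.neg_pow]
    have : 0 ≤ q * j - (1 + p ^ 2) := by subst hq; nlinarith
    have := add_nonneg this hεj
    positivity
  · have hj3 : 3 ≤ j := by obtain ⟨k, rfl⟩ := ho; omega
    -- the slack left at `j = 3` absorbs the `ε`-term, since `(p / q) ^ j ≤ (p / q) ^ 3`
    have hεterm : (p / q) ^ j * (4 * ε * j / (n * p))
        ≤ p ^ 2 * ((1 - 2 * p) * (1 - 3 * p)) / q ^ 3 :=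
      calc (p / q) ^ j * (4 * ε * j / (n * p)) ≤ (p / q) ^ 3 * (4 * ε / p) := by
            refine mul_le_mul (pow_le_pow_of_le_one hr ((div_le_one hq0).2 (by linarith)) hj3) ?_
              hεj (by positivity)
            rw [div_le_div_iff₀ (by nlinarith) hp0]
            nlinarith [mul_le_mul_of_nonneg_left hjn' (mul_nonneg hε0 hp0.le)]
        _ = p ^ 2 * (4 * ε) / q ^ 3 := by field_simp
        _ ≤ p ^ 2 * ((1 - 2 * p) * (1 - 3 * p)) / q ^ 3 := by gcongr
    rw [ho.neg_pow, neg_mul, mul_add]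
    linarith [div_pow_mul_sub_le_of_three_le hp0 hp1 hq hj3]

end

/-- The dual certificate blocks in the measure setting: with the indicated
choices of ε₀, γ₀, γ₁, one has u₀ = v₀ = 0, u₁ = -v₁ = (p²n - 2ε₁)/(2qn),
and for all sufficiently small ε₁ > 0 every block [[u_j, v_j],[v_j, u_j]]
(0 ≤ j ≤ n) is positive semidefinite. -/
theorem stmt_17 (n : ℕ) (hn : 1 ≤ n) (p : ℝ) (hp0 : 0 < p) (hp1 : p < 1 / 3)
    (q : ℝ) (hq : q = 1 - p)
    (lam0 lam1 : ℕ → ℝ)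
    (hlam0 : ∀ j, lam0 j = (-(p / q)) ^ j)
    (hlam1 : ∀ j, lam1 j = (-(p / q)) ^ j * (1 - (j : ℝ) / ((n : ℝ) * p)))
    (u v : ℝ → ℕ → ℝ)
    (hu : ∀ ε₁ j, u ε₁ j = p ^ 2 / 2 - (p ^ 2 / 2 - ε₁) * lam0 j - ε₁ * lam1 j)
    (hv : ∀ ε₁ j, v ε₁ j =
      (if j = 0 then (-(1 / 2) : ℝ) else 0)
        - (-(1 / 2) + p * q * n / 2 + ε₁) * lam0 j - (-(p * q * n / 2) - ε₁) * lam1 j) :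
    (∀ ε₁ : ℝ, u ε₁ 0 = 0 ∧ v ε₁ 0 = 0 ∧
      u ε₁ 1 = (p ^ 2 * n - 2 * ε₁) / (2 * q * n) ∧
      v ε₁ 1 = -((p ^ 2 * n - 2 * ε₁) / (2 * q * n))) ∧
    ∃ ε > 0, ∀ ε₁ : ℝ, 0 < ε₁ → ε₁ < ε → ∀ j : ℕ, j ≤ n →
      Matrix.PosSemidef !![u ε₁ j, v ε₁ j; v ε₁ j, u ε₁ j] := by
  have hq0 : 0 < q := by linarith
  have hn0 : (0 : ℝ) < n := by exact_mod_cast hn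
  have hblock : ∀ ε₁ j, j ≠ 0 →
      u ε₁ j + v ε₁ j = (p ^ 2 + (-(p / q)) ^ j * (1 - p ^ 2 - q * j)) / 2 ∧
      u ε₁ j - v ε₁ j =
        (p ^ 2 + (-(p / q)) ^ j * (q * j - (1 + p ^ 2) + 4 * ε₁ * j / (n * p))) / 2 := by
    intro ε₁ j hj
    rw [hu, hv, hlam0, hlam1, if_neg hj]
    constructor <;> field_simp <;> ring
  have low : ∀ ε₁ : ℝ, u ε₁ 0 = 0 ∧ v ε₁ 0 = 0 ∧
      u ε₁ 1 = (p ^ 2 * n - 2 * ε₁) / (2 * q * n) ∧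
      v ε₁ 1 = -((p ^ 2 * n - 2 * ε₁) / (2 * q * n)) := by
    intro ε₁
    refine ⟨?_, ?_, ?_, ?_⟩ <;> simp only [hu, hv, hlam0, hlam1, ↓reduceIte, one_ne_zero] <;>
      subst hq <;> field_simp <;> ring
  refine ⟨low, min (p ^ 2 / 2) ((1 - 2 * p) * (1 - 3 * p) / 4),
    lt_min (by positivity) (by nlinarith), fun ε₁ hε₁ hε j hj ↦ ?_⟩
  obtain ⟨hu0, hv0, hu1, hv1⟩ := low ε₁
  match j with
  | 0 =>
    rw [hu0, hv0]
    exact posSemidef_of_add_nonneg_of_sub_nonneg (by norm_num) (by norm_num)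
  | 1 =>
    have hn1 : (1 : ℝ) ≤ n := by exact_mod_cast hn
    have : 0 ≤ (p ^ 2 * n - 2 * ε₁) / (2 * q * n) :=
      div_nonneg (by nlinarith [hε.trans_le (min_le_left _ _)]) (by positivity)
    rw [hu1, hv1]
    exact posSemidef_of_add_nonneg_of_sub_nonneg (by linarith) (by linarith)
  | j + 2 =>
    obtain ⟨hsum, hdiff⟩ := hblock ε₁ (j + 2) (by omega)
    refine posSemidef_of_add_nonneg_of_sub_nonneg ?_ ?_
    · rw [hsum]
      exact div_nonneg (block_add_nonneg hp0 hp1 hq (by omega)) zero_le_two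
    · rw [hdiff]
      exact div_nonneg (block_sub_nonneg hp0 hp1 hq (by omega) hj hε₁.le
        (by linarith [hε.trans_le (min_le_right _ _)])) zero_le_two
end

section
/- Let k ≥ 3 and n ≥ 3(k-1). In the Johnson scheme J(n,k), let λ₀(j) = (-1)^j·C(n-k-j, k-j) and λ₁(j) = (-1)^j·C(n-k-j, k-j)·((n-k-j+1)(k-j)/(n-2k+1) - k). With ε₀ = -k²ε₁/(n-2k+1) + (k(k-1)/(2n(n-1)))·C(n,k)/C(n-k,k), γ₀ = k²ε₁/(n-2k+1) + (1/2)(k²(n-k)/(n(n-1)) - 1)·C(n,k)/C(n-k,k), γ₁ = -ε₁ - ((n-k)(n-2k+1)/(2n(n-1)))·C(n,k)/C(n-k,k), define u_j = (1/2)C(n-2,k-2) - ε₀λ₀(j) - ε₁λ₁(j) and v_j = δ_j - γ₀λ₀(j) - γ₁λ₁(j), where δ₀ = -(1/2)C(n,k) and δ_j = 0 otherwise. Then u₀ = v₀ = 0 and u₁ = -v₁ = (n/(2(n-k)))C(n-2,k-2) - ε₁·n·C(n-k-1,k-1)/(n-2k+1). -/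
/-!
The absorption identity `C(m-1, k-1) = C(m, k) k / m` rewrites `C(n-2, k-2)` and
`C(n-k-1, k-1)` in terms of `C(n, k)` and `C(n-k, k)`. After this, `u₀, v₀, u₁, v₁` are rational
functions of `n, k, ε₁, C(n, k), C(n-k, k)`, and the four claims are identities between them whose
denominators `n, n - 1, n - k, n - 2k + 1, C(n-k, k)` are nonzero because `n ≥ 2k`.
-/

theorem Nat.cast_choose_pred_pred {K : Type*} [Field K] [CharZero K] {m k : ℕ}
    (hm : m ≠ 0) (hk : k ≠ 0) :
    ((m - 1).choose (k - 1) : K) = m.choose k * k / m := by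
  obtain ⟨p, rfl⟩ := Nat.exists_eq_succ_of_ne_zero hm
  obtain ⟨q, rfl⟩ := Nat.exists_eq_succ_of_ne_zero hk
  have h : ((p + 1 : ℕ) : K) * p.choose q = (p + 1).choose (q + 1) * (q + 1 : ℕ) := by
    exact_mod_cast Nat.add_one_mul_choose_eq p q
  rw [eq_div_iff (Nat.cast_ne_zero.2 p.succ_ne_zero)]
  simpa [mul_comm] using h

theorem Nat.cast_choose_sub_two_sub_two {K : Type*} [Field K] [CharZero K] {n k : ℕ}
    (hn : 2 ≤ n) (hk : 2 ≤ k) :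
    ((n - 2).choose (k - 2) : K) = n.choose k * (k * (k - 1)) / (n * (n - 1)) := by
  rw [show n - 2 = n - 1 - 1 by omega, show k - 2 = k - 1 - 1 by omega,
    Nat.cast_choose_pred_pred (by omega) (by omega), Nat.cast_choose_pred_pred (by omega) (by omega),
    Nat.cast_pred (by omega : 0 < k), Nat.cast_pred (by omega : 0 < n)]
  have hn0 : (n : K) ≠ 0 := by exact_mod_cast (by omega : n ≠ 0)
  have hn1 : (n : K) - 1 ≠ 0 := by
    rw [sub_ne_zero]; exact_mod_cast (by omega : n ≠ 1)
  field_simp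

/-- Johnson-scheme dual certificate: with the stated choices of ε₀, γ₀, γ₁ one has
u₀ = v₀ = 0 and u₁ = -v₁ = (n/(2(n-k)))C(n-2,k-2) - ε₁nC(n-k-1,k-1)/(n-2k+1). -/
theorem stmt_18 (n k : ℕ) (hk : 3 ≤ k) (hn : 3 * (k - 1) ≤ n) (ε₁ : ℝ)
    (lam0 lam1 : ℕ → ℝ)
    (hlam0 : ∀ j, lam0 j = (-1 : ℝ) ^ j * (Nat.choose (n - k - j) (k - j) : ℝ))
    (hlam1 : ∀ j, lam1 j = (-1 : ℝ) ^ j * (Nat.choose (n - k - j) (k - j) : ℝ) *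
      (((n : ℝ) - k - j + 1) * ((k : ℝ) - j) / ((n : ℝ) - 2 * k + 1) - k))
    (ε₀ γ₀ γ₁ : ℝ)
    (hε₀ : ε₀ = -((k : ℝ) ^ 2) * ε₁ / ((n : ℝ) - 2 * k + 1)
      + ((k : ℝ) * ((k : ℝ) - 1) / (2 * n * ((n : ℝ) - 1))) *
          ((Nat.choose n k : ℝ) / (Nat.choose (n - k) k : ℝ)))
    (hγ₀ : γ₀ = (k : ℝ) ^ 2 * ε₁ / ((n : ℝ) - 2 * k + 1)
      + (1 / 2) * ((k : ℝ) ^ 2 * ((n : ℝ) - k) / ((n : ℝ) * ((n : ℝ) - 1)) - 1) *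
          ((Nat.choose n k : ℝ) / (Nat.choose (n - k) k : ℝ)))
    (hγ₁ : γ₁ = -ε₁ - (((n : ℝ) - k) * ((n : ℝ) - 2 * k + 1) / (2 * n * ((n : ℝ) - 1))) *
          ((Nat.choose n k : ℝ) / (Nat.choose (n - k) k : ℝ)))
    (u v : ℕ → ℝ)
    (hu : ∀ j, u j = (1 / 2) * (Nat.choose (n - 2) (k - 2) : ℝ) - ε₀ * lam0 j - ε₁ * lam1 j)
    (hv : ∀ j, v j = (if j = 0 then -(1 / 2) * (Nat.choose n k : ℝ) else 0)
      - γ₀ * lam0 j - γ₁ * lam1 j) :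
    u 0 = 0 ∧ v 0 = 0 ∧
    u 1 = ((n : ℝ) / (2 * ((n : ℝ) - k))) * (Nat.choose (n - 2) (k - 2) : ℝ)
      - ε₁ * n * (Nat.choose (n - k - 1) (k - 1) : ℝ) / ((n : ℝ) - 2 * k + 1) ∧
    v 1 = -(((n : ℝ) / (2 * ((n : ℝ) - k))) * (Nat.choose (n - 2) (k - 2) : ℝ)
      - ε₁ * n * (Nat.choose (n - k - 1) (k - 1) : ℝ) / ((n : ℝ) - 2 * k + 1)) := by
  have h2k : 2 * k ≤ n := by omega
  have hk' : (3 : ℝ) ≤ k := by exact_mod_cast hk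
  have h2k' : 2 * (k : ℝ) ≤ n := by exact_mod_cast h2k
  have hD : (n : ℝ) - 2 * k + 1 ≠ 0 := by linarith
  have hn0 : (n : ℝ) ≠ 0 := by linarith
  have hn1 : (n : ℝ) - 1 ≠ 0 := by linarith
  have hnk : (n : ℝ) - k ≠ 0 := by linarith
  have hM : ((n - k).choose k : ℝ) ≠ 0 := Nat.cast_ne_zero.2 (Nat.choose_pos (by omega)).ne'
  have hA : ((n - 2).choose (k - 2) : ℝ) = n.choose k * (k * (k - 1)) / (n * (n - 1)) :=
    Nat.cast_choose_sub_two_sub_two (by omega) (by omega)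
  have hB : ((n - k - 1).choose (k - 1) : ℝ) = (n - k).choose k * k / (n - k) := by
    rw [Nat.cast_choose_pred_pred (by omega) (by omega), Nat.cast_sub (by omega : k ≤ n)]
  simp only [hu, hv, hlam0, hlam1, hε₀, hγ₀, hγ₁, hA, hB, Nat.sub_zero, pow_zero, pow_one,
    Nat.cast_zero, Nat.cast_one, sub_zero, if_pos, if_neg one_ne_zero]
  -- `field_simp` meets the denominator `n - 2k + 1` of `λ₁` also in the normal form `n - k * 2 + 1`
  refine ⟨?_, ?_, ?_, ?_⟩ <;> field_simp [show (n : ℝ) - k * 2 + 1 ≠ 0 by linarith] <;> ring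
end
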